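/- arXiv:2011.08578 — 8 statements merged into one kernel-verified Lean document; each statement's English description precedes it below -/
import Mathlib

section
/- Suppose z : [0, T] → ℝ is a nonnegative continuous function, ζ > 0, t ∈ (0, T], and for all r ∈ [0, t] we have z(r)² ≤ (1 - ζ t²) z(0)² + (11/12) ζ t² (max_{s ≤ r'} z(s))² where r' is the smallest grid point ≥ r (with grid spacing h dividing t), and ζ t² ≤ 1. Then z(t)² ≤ (1 - (1/12) ζ t²) z(0)². -/
open Set

theorem stmt_4 (T ζ t h : ℝ) (z : ℝ → ℝ)
    (hz : ContinuousOn z (Icc 0 T)) (hznn : ∀ s ∈ Icc 0 T, 0 ≤ z s)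
    (hζ : 0 < ζ) (ht : t ∈ Ioc 0 T) (hh : 0 < h) (hdiv : ∃ n : ℕ, t = n * h)
    (hζt : ζ * t ^ 2 ≤ 1)
    (hbound : ∀ r ∈ Icc 0 t,
      z r ^ 2 ≤ (1 - ζ * t ^ 2) * z 0 ^ 2
        + (11 / 12) * ζ * t ^ 2 * (sSup (z '' Icc 0 (min t (h * ⌈r / h⌉)))) ^ 2) :
    z t ^ 2 ≤ (1 - (1 / 12) * ζ * t ^ 2) * z 0 ^ 2 := by
  obtain ⟨ht0, htT⟩ := ht
  have hsub : Icc (0:ℝ) t ⊆ Icc 0 T := Icc_subset_Icc le_rfl htT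
  have hc : ContinuousOn z (Icc 0 t) := hz.mono hsub
  have hne : (Icc (0:ℝ) t).Nonempty := ⟨0, le_rfl, le_of_lt ht0⟩
  obtain ⟨x, hx, hmax⟩ := isCompact_Icc.exists_isMaxOn hne hc
  set M := z x with hMdef
  have hM0 : 0 ≤ M := hznn x (hsub hx)
  -- inner sup is between 0 and M
  have hsupb : ∀ r ∈ Icc (0:ℝ) t,
      0 ≤ sSup (z '' Icc 0 (min t (h * ⌈r / h⌉))) ∧
      sSup (z '' Icc 0 (min t (h * ⌈r / h⌉))) ≤ M := by
    intro r hr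
    set c := min t (h * ⌈r / h⌉) with hcdef
    have hc0 : 0 ≤ c := by
      apply le_min (le_of_lt ht0)
      have : (0:ℤ) ≤ ⌈r / h⌉ := Int.ceil_nonneg (div_nonneg hr.1 hh.le)
      positivity
    have hct : c ≤ t := min_le_left _ _
    have hsubc : Icc (0:ℝ) c ⊆ Icc 0 t := Icc_subset_Icc le_rfl hct
    have hnec : (z '' Icc 0 c).Nonempty := ⟨z 0, 0, ⟨le_rfl, hc0⟩, rfl⟩
    have hub : ∀ y ∈ z '' Icc 0 c, y ≤ M := by
      rintro y ⟨s, hs, rfl⟩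
      exact hmax (hsubc hs)
    constructor
    · have hbdd : BddAbove (z '' Icc 0 c) := ⟨M, hub⟩
      have h0mem : z 0 ∈ z '' Icc 0 c := ⟨0, ⟨le_rfl, hc0⟩, rfl⟩
      exact le_trans (hznn 0 ⟨le_rfl, le_trans ht0.le htT⟩) (le_csSup hbdd h0mem)
    · exact csSup_le hnec hub
  have hkey : M ^ 2 ≤ (1 - ζ * t ^ 2) * z 0 ^ 2 + (11 / 12) * ζ * t ^ 2 * M ^ 2 := by
    have hb := hbound x hx
    have hs := hsupb x hx
    have hsq : (sSup (z '' Icc 0 (min t (h * ⌈x / h⌉)))) ^ 2 ≤ M ^ 2 :=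
      pow_le_pow_left₀ hs.1 hs.2 2
    nlinarith [mul_pos hζ (pow_pos ht0 2)]
  have hzt : z t ^ 2 ≤ M ^ 2 := by
    have h1 : z t ≤ M := hmax ⟨le_of_lt ht0, le_rfl⟩
    have h2 : 0 ≤ z t := hznn t ⟨le_of_lt ht0, htT⟩
    exact pow_le_pow_left₀ h2 h1 2
  have ha : 0 < ζ * t ^ 2 := mul_pos hζ (pow_pos ht0 2)
  have hz0 : 0 ≤ z 0 ^ 2 := sq_nonneg _
  nlinarith [sq_nonneg (ζ * t ^ 2 * z 0), mul_le_mul_of_nonneg_left hkey ha.le,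
    sq_nonneg M]
end

section
/- Let (H, ⟨·,·⟩) be a finite-dimensional real inner product space, C a positive-definite self-adjoint operator on H, Φ : H → ℝ differentiable, and define one step of the integrator by q' = cos(h) q + sin(h) v - (h/2) sin(h) C DΦ(q), v' = -sin(h) q + cos(h) v - (h/2) cos(h) C DΦ(q) - (h/2) C DΦ(q'). With H(q,v) = Φ(q) + (1/2)⟨q, C⁻¹ q⟩ + (1/2)⟨v, C⁻¹ v⟩, one has H(q', v') - H(q, v) = Φ(q') - Φ(q) + (h²/8)(⟨DΦ(q), C DΦ(q)⟩ - ⟨DΦ(q'), C DΦ(q')⟩) - (h/2)(⟨v, DΦ(q)⟩ + ⟨v', DΦ(q')⟩). -/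
/-! The integrator is a Strang splitting: a half kick `v ↦ v - (h/2) C DΦ(q)`, the exact rotation
`(q, v) ↦ (cos h q + sin h v, -sin h q + cos h v)` of the Gaussian part, and a second half kick at
`q'`. The rotation preserves `⟨q, C⁻¹ q⟩ + ⟨v, C⁻¹ v⟩` because `C⁻¹` is symmetric, and a kick by
`t C g` changes `⟨v, C⁻¹ v⟩` by `2t ⟨v, g⟩ + t² ⟨g, C g⟩`; adding up the two kicks gives the formula. -/

open Real

namespace LinearMap.IsSymmetric

variable {H : Type*} [NormedAddCommGroup H] [InnerProductSpace ℝ H] {C A : H →ₗ[ℝ] H}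

theorem inner_apply_apply_of_rightInverse (hC : C.IsSymmetric) (hA : ∀ x, C (A x) = x)
    (x y : H) : inner ℝ (C x) (A y) = inner ℝ x y := by
  rw [hC, hA]

theorem of_rightInverse (hC : C.IsSymmetric) (hA : ∀ x, C (A x) = x) : A.IsSymmetric := by
  intro x y
  rw [← hC.inner_apply_apply_of_rightInverse hA, hA]

theorem inner_rotate_add_inner_rotate (hA : A.IsSymmetric) (θ : ℝ) (q v : H) :
    inner ℝ (cos θ • q + sin θ • v) (A (cos θ • q + sin θ • v))
      + inner ℝ (-(sin θ • q) + cos θ • v) (A (-(sin θ • q) + cos θ • v))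
      = inner ℝ q (A q) + inner ℝ v (A v) := by
  have hvq : inner ℝ v (A q) = inner ℝ q (A v) := by rw [← hA, real_inner_comm]
  simp only [map_add, map_neg, map_smul, inner_add_left, inner_add_right, inner_neg_left,
    inner_neg_right, real_inner_smul_left, real_inner_smul_right, hvq]
  linear_combination (inner ℝ q (A q) + inner ℝ v (A v)) * sin_sq_add_cos_sq θ

theorem inner_add_smul_apply_add_smul (hC : C.IsSymmetric) (hA : ∀ x, C (A x) = x)
    (t : ℝ) (v g : H) :
    inner ℝ (v + t • C g) (A (v + t • C g))
      = inner ℝ v (A v) + 2 * t * inner ℝ v g + t ^ 2 * inner ℝ g (C g) := by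
  have hAsymm := hC.of_rightInverse hA
  have hgv : inner ℝ (C g) (A v) = inner ℝ v g := by
    rw [hC.inner_apply_apply_of_rightInverse hA, real_inner_comm]
  have hvg : inner ℝ v (A (C g)) = inner ℝ v g := by rw [← hAsymm, real_inner_comm, hgv]
  have hgg : inner ℝ (C g) (A (C g)) = inner ℝ g (C g) :=
    hC.inner_apply_apply_of_rightInverse hA g (C g)
  simp only [map_add, map_smul, inner_add_left, inner_add_right, real_inner_smul_left,
    real_inner_smul_right, hgv, hvg, hgg]
  ring

end LinearMap.IsSymmetric

theorem stmt_7_general {H : Type*} [NormedAddCommGroup H] [InnerProductSpace ℝ H]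
    [FiniteDimensional ℝ H]
    (C invC : H →ₗ[ℝ] H)
    (hCsa : ∀ x y : H, (inner ℝ (C x) y : ℝ) = inner ℝ x (C y))
    (hinv' : ∀ x : H, C (invC x) = x)
    (Φ : H → ℝ)
    (h : ℝ) (q v q' v' : H)
    (hq' : q' = Real.cos h • q + Real.sin h • v
      - (h / 2 * Real.sin h) • C (gradient Φ q))
    (hv' : v' = -(Real.sin h • q) + Real.cos h • v
      - (h / 2 * Real.cos h) • C (gradient Φ q) - (h / 2) • C (gradient Φ q')) :
    (Φ q' + (1 / 2) * (inner ℝ q' (invC q') : ℝ) + (1 / 2) * (inner ℝ v' (invC v') : ℝ))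
      - (Φ q + (1 / 2) * (inner ℝ q (invC q) : ℝ) + (1 / 2) * (inner ℝ v (invC v) : ℝ))
    = Φ q' - Φ q
      + h ^ 2 / 8 * ((inner ℝ (gradient Φ q) (C (gradient Φ q)) : ℝ)
          - (inner ℝ (gradient Φ q') (C (gradient Φ q')) : ℝ))
      - h / 2 * ((inner ℝ v (gradient Φ q) : ℝ) + (inner ℝ v' (gradient Φ q') : ℝ)) := by
  have hC : C.IsSymmetric := hCsa
  set g := gradient Φ q
  set g' := gradient Φ q'
  have kick₁ := hC.inner_add_smul_apply_add_smul hinv' (-(h / 2)) v g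
  have kick₂ := hC.inner_add_smul_apply_add_smul hinv' (h / 2) v' g'
  set v₁ := v + (-(h / 2)) • C g
  set v₂ := v' + (h / 2) • C g'
  have hq'_rot : q' = cos h • q + sin h • v₁ := by
    rw [hq']; module
  have hv₂_rot : v₂ = -(sin h • q) + cos h • v₁ := by
    simp only [v₂, hv']; module
  have rotate := (hC.of_rightInverse hinv').inner_rotate_add_inner_rotate h q v₁
  rw [← hq'_rot, ← hv₂_rot] at rotate
  linear_combination (1 / 2 : ℝ) * (rotate + kick₁ - kick₂)

theorem stmt_7 {H : Type*} [NormedAddCommGroup H] [InnerProductSpace ℝ H]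
    [FiniteDimensional ℝ H]
    (C invC : H →ₗ[ℝ] H)
    (hCsa : ∀ x y : H, (inner ℝ (C x) y : ℝ) = inner ℝ x (C y))
    (hCpos : ∀ x : H, x ≠ 0 → (0:ℝ) < inner ℝ (C x) x)
    (hinv : ∀ x : H, invC (C x) = x) (hinv' : ∀ x : H, C (invC x) = x)
    (Φ : H → ℝ) (hΦ : Differentiable ℝ Φ)
    (h : ℝ) (q v q' v' : H)
    (hq' : q' = Real.cos h • q + Real.sin h • v
      - (h / 2 * Real.sin h) • C (gradient Φ q))
    (hv' : v' = -(Real.sin h • q) + Real.cos h • v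
      - (h / 2 * Real.cos h) • C (gradient Φ q) - (h / 2) • C (gradient Φ q')) :
    (Φ q' + (1 / 2) * (inner ℝ q' (invC q') : ℝ) + (1 / 2) * (inner ℝ v' (invC v') : ℝ))
      - (Φ q + (1 / 2) * (inner ℝ q (invC q) : ℝ) + (1 / 2) * (inner ℝ v (invC v) : ℝ))
    = Φ q' - Φ q
      + h ^ 2 / 8 * ((inner ℝ (gradient Φ q) (C (gradient Φ q)) : ℝ)
          - (inner ℝ (gradient Φ q') (C (gradient Φ q')) : ℝ))
      - h / 2 * ((inner ℝ v (gradient Φ q) : ℝ) + (inner ℝ v' (gradient Φ q') : ℝ)) :=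
  stmt_7_general C invC hCsa hinv' Φ h q v q' v' hq' hv'
end

section
/- With notation as in the previous statement (one Strang-splitting step of preconditioned HMC in finite dimensions), the following identity for the quadratic parts holds: ⟨q', C⁻¹ q'⟩ + ⟨v', C⁻¹ v'⟩ = ⟨q, C⁻¹ q⟩ + ⟨v, C⁻¹ v⟩ + (h²/4)(⟨DΦ(q), C DΦ(q)⟩ - ⟨DΦ(q'), C DΦ(q')⟩) - h(⟨v, DΦ(q)⟩ + ⟨v', DΦ(q')⟩). -/
/-!
The step is a Strang splitting: a half kick `v ↦ v - (h/2) C DΦ(q)`, an exact rotation of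
`(q, v)` by the angle `h`, and a second half kick with `DΦ(q')`. The rotation preserves
`⟨q, C⁻¹ q⟩ + ⟨v, C⁻¹ v⟩`; each kick changes `⟨v, C⁻¹ v⟩` by a term linear and a term
quadratic in `h`, and these are the correction terms of the identity.
-/

open Real
open scoped RealInnerProductSpace

section

variable {E : Type*} [NormedAddCommGroup E] [InnerProductSpace ℝ E]

lemma inner_map_self_rotation (A : E →ₗ[ℝ] E) (θ : ℝ) (x y : E) :
    ⟪cos θ • x + sin θ • y, A (cos θ • x + sin θ • y)⟫
      + ⟪-(sin θ • x) + cos θ • y, A (-(sin θ • x) + cos θ • y)⟫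
      = ⟪x, A x⟫ + ⟪y, A y⟫ := by
  simp only [map_add, map_neg, map_smul, inner_add_left, inner_add_right, inner_neg_left,
    inner_neg_right, real_inner_smul_left, real_inner_smul_right]
  linear_combination (⟪x, A x⟫ + ⟪y, A y⟫) * sin_sq_add_cos_sq θ

lemma inner_inverse_self_add_smul {C invC : E →ₗ[ℝ] E} (hC : C.IsSymmetric)
    (hinv : ∀ x, invC (C x) = x) (hinv' : ∀ x, C (invC x) = x) (x g : E) (t : ℝ) :
    ⟪x + t • C g, invC (x + t • C g)⟫ = ⟪x, invC x⟫ + 2 * t * ⟪x, g⟫ + t ^ 2 * ⟪g, C g⟫ := by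
  have hcross : ⟪C g, invC x⟫ = ⟪x, g⟫ := by rw [hC, hinv', real_inner_comm]
  have hdiag : ⟪C g, g⟫ = ⟪g, C g⟫ := real_inner_comm _ _
  simp only [map_add, map_smul, hinv, inner_add_left, inner_add_right, real_inner_smul_left,
    real_inner_smul_right, hcross, hdiag]
  ring

end

theorem stmt_8_general {H : Type*} [NormedAddCommGroup H] [InnerProductSpace ℝ H]
    [FiniteDimensional ℝ H]
    (C invC : H →ₗ[ℝ] H)
    (hCsa : ∀ x y : H, (inner ℝ (C x) y : ℝ) = inner ℝ x (C y))
    (hinv : ∀ x : H, invC (C x) = x) (hinv' : ∀ x : H, C (invC x) = x)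
    (Φ : H → ℝ)
    (h : ℝ) (q v q' v' : H)
    (hq' : q' = Real.cos h • q + Real.sin h • v
      - (h / 2 * Real.sin h) • C (gradient Φ q))
    (hv' : v' = -(Real.sin h • q) + Real.cos h • v
      - (h / 2 * Real.cos h) • C (gradient Φ q) - (h / 2) • C (gradient Φ q')) :
    (inner ℝ q' (invC q') : ℝ) + (inner ℝ v' (invC v') : ℝ)
    = (inner ℝ q (invC q) : ℝ) + (inner ℝ v (invC v) : ℝ)
      + h ^ 2 / 4 * ((inner ℝ (gradient Φ q) (C (gradient Φ q)) : ℝ)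
          - (inner ℝ (gradient Φ q') (C (gradient Φ q')) : ℝ))
      - h * ((inner ℝ v (gradient Φ q) : ℝ) + (inner ℝ v' (gradient Φ q') : ℝ)) := by
  set g := gradient Φ q
  set g' := gradient Φ q'
  set w := v + (-(h / 2)) • C g
  have hq_rot : q' = cos h • q + sin h • w := by rw [hq']; module
  have hv_rot : v' + (h / 2) • C g' = -(sin h • q) + cos h • w := by rw [hv']; module
  have hrot := inner_map_self_rotation invC h q w
  rw [← hq_rot, ← hv_rot, inner_inverse_self_add_smul hCsa hinv hinv',
    inner_inverse_self_add_smul hCsa hinv hinv'] at hrot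
  linear_combination hrot

theorem stmt_8 {H : Type*} [NormedAddCommGroup H] [InnerProductSpace ℝ H]
    [FiniteDimensional ℝ H]
    (C invC : H →ₗ[ℝ] H)
    (hCsa : ∀ x y : H, (inner ℝ (C x) y : ℝ) = inner ℝ x (C y))
    (hCpos : ∀ x : H, x ≠ 0 → (0:ℝ) < inner ℝ (C x) x)
    (hinv : ∀ x : H, invC (C x) = x) (hinv' : ∀ x : H, C (invC x) = x)
    (Φ : H → ℝ) (hΦ : Differentiable ℝ Φ)
    (h : ℝ) (q v q' v' : H)
    (hq' : q' = Real.cos h • q + Real.sin h • v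
      - (h / 2 * Real.sin h) • C (gradient Φ q))
    (hv' : v' = -(Real.sin h • q) + Real.cos h • v
      - (h / 2 * Real.cos h) • C (gradient Φ q) - (h / 2) • C (gradient Φ q')) :
    (inner ℝ q' (invC q') : ℝ) + (inner ℝ v' (invC v') : ℝ)
    = (inner ℝ q (invC q) : ℝ) + (inner ℝ v (invC v) : ℝ)
      + h ^ 2 / 4 * ((inner ℝ (gradient Φ q) (C (gradient Φ q)) : ℝ)
          - (inner ℝ (gradient Φ q') (C (gradient Φ q')) : ℝ))
      - h * ((inner ℝ v (gradient Φ q) : ℝ) + (inner ℝ v' (gradient Φ q') : ℝ)) :=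
  stmt_8_general C invC hCsa hinv hinv' Φ h q v q' v' hq' hv'
end

section
/- Let H be a Banach space, F : H → H with ‖F(x)‖ ≤ L‖x‖ + L' for all x, and let q solve q''(t) = -q(t) - F(q(t)) with q(0) = x, q'(0) = v. Suppose t > 0 satisfies t²(1 + L) ≤ 1. Then max_{s ≤ t} ‖q(s) - (x + s v)‖ ≤ t²(1 + L) max{‖x‖, ‖x + t v‖} + L' t². -/
/-!
Write `e(s) = q(s) - (x + s v)` and let `M` be the maximum of `‖e‖` on `[0, t]`. By convexity of
the norm, `‖x + s v‖ ≤ K := max ‖x‖ ‖x + t v‖` there, so `‖q(s)‖ ≤ M + K` and the acceleration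
`-q - F(q)` has norm at most `C = (1 + L)(M + K) + L'`. Integrating twice gives
`M ≤ C t² / 2`, and since `t²(1 + L) ≤ 1` the term `M` on the right can be absorbed on the left.
The degenerate case `L < 0` only occurs on the zero space.
-/

open Set

theorem nonneg_of_norm_le_mul_add {H : Type*} [NormedAddCommGroup H] [NormedSpace ℝ H]
    [Nontrivial H] {F : H → H} {L L' : ℝ} (hF : ∀ x : H, ‖F x‖ ≤ L * ‖x‖ + L') : 0 ≤ L := by
  by_contra! hL
  obtain ⟨y, hy⟩ := exists_norm_eq H (c := (|L'| + 1) / -L)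
    (div_nonneg (by positivity) (by linarith))
  have hLy : L * ‖y‖ = -(|L'| + 1) := by
    rw [hy]; field_simp; rw [div_self hL.ne]
  linarith [hF y, norm_nonneg (F y), le_abs_self L']

theorem norm_neg_sub_le_of_norm_le_mul_add {H : Type*} [SeminormedAddCommGroup H] {F : H → H}
    {L L' : ℝ} (hF : ∀ x : H, ‖F x‖ ≤ L * ‖x‖ + L') (y : H) : ‖-y - F y‖ ≤ (1 + L) * ‖y‖ + L' := by
  have h := norm_sub_le (-y) (F y)
  rw [norm_neg] at h
  linarith [hF y]

theorem norm_add_smul_le_max {E : Type*} [SeminormedAddCommGroup E] [NormedSpace ℝ E]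
    (x v : E) {t u : ℝ} (ht : 0 < t) (hu : u ∈ Icc 0 t) : ‖x + u • v‖ ≤ max ‖x‖ ‖x + t • v‖ := by
  refine convexOn_norm convex_univ |>.le_on_segment (mem_univ _) (mem_univ _) ?_
  rw [segment_eq_image']
  refine ⟨u / t, ⟨div_nonneg hu.1 ht.le, div_le_one_of_le₀ hu.2 ht.le⟩, ?_⟩
  simp only [add_sub_cancel_left, smul_smul, div_mul_cancel₀ _ ht.ne']

theorem norm_sub_add_smul_le_of_norm_deriv_deriv_le {E : Type*} [NormedAddCommGroup E]
    [NormedSpace ℝ E] {q p a : ℝ → E} {t C : ℝ}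
    (hq : ∀ u ∈ Icc 0 t, HasDerivAt q (p u) u) (hp : ∀ u ∈ Icc 0 t, HasDerivAt p (a u) u)
    (ha : ∀ u ∈ Ico 0 t, ‖a u‖ ≤ C) :
    ∀ u ∈ Icc 0 t, ‖q u - (q 0 + u • p 0)‖ ≤ C * u ^ 2 / 2 := by
  have hp_sub : ∀ u ∈ Icc 0 t, ‖p u - p 0‖ ≤ C * u := fun u hu => by
    simpa using norm_image_sub_le_of_norm_deriv_le_segment'
      (fun u hu => (hp u hu).hasDerivWithinAt) ha u hu
  refine fun u hu => image_norm_le_of_norm_deriv_right_le_deriv_boundary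
    (f := fun u => q u - (q 0 + u • p 0)) (f' := fun u => p u - p 0)
    (B := fun u => C * u ^ 2 / 2) (B' := fun u => C * u) ?_ ?_ (by simp) ?_
    (fun u hu => hp_sub u (Ico_subset_Icc_self hu)) hu
  · exact fun u hu => ((hq u hu).continuousAt.sub (by fun_prop)).continuousWithinAt
  · intro u hu
    have hline := ((hasDerivAt_id u).smul_const (p 0)).const_add (q 0)
    exact (((hq u (Ico_subset_Icc_self hu)).sub hline).congr_deriv (by simp)).hasDerivWithinAt
  · exact fun u => (((hasDerivAt_pow 2 u).const_mul C).div_const 2).congr_deriv (by norm_num; ring)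

theorem stmt_10 {H : Type*} [NormedAddCommGroup H] [NormedSpace ℝ H]
    (F : H → H) (L L' : ℝ) (hF : ∀ x : H, ‖F x‖ ≤ L * ‖x‖ + L')
    (q p : ℝ → H) (x v : H)
    (hq0 : q 0 = x) (hp0 : p 0 = v)
    (hq' : ∀ s : ℝ, HasDerivAt q (p s) s)
    (hp' : ∀ s : ℝ, HasDerivAt p (-(q s) - F (q s)) s)
    (t : ℝ) (ht : 0 < t) (htL : t ^ 2 * (1 + L) ≤ 1) :
    ∀ s ∈ Icc (0:ℝ) t,
      ‖q s - (x + s • v)‖ ≤ t ^ 2 * (1 + L) * max ‖x‖ ‖x + t • v‖ + L' * t ^ 2 := by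
  intro s hs
  have hL' : 0 ≤ L' := by simpa using (norm_nonneg _).trans (hF 0)
  rcases subsingleton_or_nontrivial H with hH | hH
  · simp only [Subsingleton.elim _ (0 : H), norm_zero, max_self, mul_zero, zero_add]
    positivity
  have hL : 0 ≤ L := nonneg_of_norm_le_mul_add hF
  set K := max ‖x‖ ‖x + t • v‖
  have hqc : Continuous q := continuous_iff_continuousAt.2 fun u => (hq' u).continuousAt
  obtain ⟨s₀, hs₀, hmax⟩ := isCompact_Icc.exists_isMaxOn (nonempty_Icc.2 ht.le)
    (hqc.sub (by fun_prop : Continuous fun u : ℝ => x + u • v)).norm.continuousOn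
  set M := ‖q s₀ - (x + s₀ • v)‖
  have hq_le : ∀ u ∈ Icc 0 t, ‖q u‖ ≤ M + K := fun u hu => calc
    ‖q u‖ ≤ ‖q u - (x + u • v)‖ + ‖x + u • v‖ := norm_le_norm_sub_add _ _
    _ ≤ M + K := add_le_add (hmax hu) (norm_add_smul_le_max x v ht hu)
  have hacc : ∀ u ∈ Ico 0 t, ‖-(q u) - F (q u)‖ ≤ (1 + L) * (M + K) + L' := fun u hu =>
    (norm_neg_sub_le_of_norm_le_mul_add hF _).trans <| by
      gcongr
      exact hq_le u (Ico_subset_Icc_self hu)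
  have hM : M ≤ ((1 + L) * (M + K) + L') * t ^ 2 / 2 := by
    have h := norm_sub_add_smul_le_of_norm_deriv_deriv_le (fun u _ => hq' u) (fun u _ => hp' u)
      hacc s₀ hs₀
    rw [hq0, hp0] at h
    refine h.trans ?_
    have : 0 ≤ M + K := (norm_nonneg _).trans (hq_le s₀ hs₀)
    have : s₀ ^ 2 ≤ t ^ 2 := pow_le_pow_left₀ hs₀.1 hs₀.2 2
    gcongr
  calc ‖q s - (x + s • v)‖ ≤ M := hmax hs
    _ ≤ t ^ 2 * (1 + L) * K + L' * t ^ 2 := by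
      nlinarith [mul_le_mul_of_nonneg_right htL (norm_nonneg (q s₀ - (x + s₀ • v)))]
end

section
/- Let H be a Banach space, F : H → H globally Lipschitz with constant L, and let q(·; x, v) solve q'' = -q - F(q) with initial position x and velocity v. Suppose t > 0 satisfies t²(1 + L) ≤ 1. Then for all x, y, u, v ∈ H, max_{s ≤ t} ‖q(s; x, v) - q(s; y, u) - (x - y) - s(v - u)‖ ≤ t²(1 + L) max{‖x - y‖, ‖x - y + t(v - u)‖}. -/
open Set

theorem stmt_11 {H : Type*} [NormedAddCommGroup H] [NormedSpace ℝ H]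
    (F : H → H) (L : ℝ) (hL : 0 ≤ L)
    (hF : ∀ a b : H, ‖F a - F b‖ ≤ L * ‖a - b‖)
    (q₁ p₁ q₂ p₂ : ℝ → H) (x y v u : H)
    (hq₁0 : q₁ 0 = x) (hp₁0 : p₁ 0 = v) (hq₂0 : q₂ 0 = y) (hp₂0 : p₂ 0 = u)
    (hq₁' : ∀ s : ℝ, HasDerivAt q₁ (p₁ s) s)
    (hp₁' : ∀ s : ℝ, HasDerivAt p₁ (-(q₁ s) - F (q₁ s)) s)
    (hq₂' : ∀ s : ℝ, HasDerivAt q₂ (p₂ s) s)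
    (hp₂' : ∀ s : ℝ, HasDerivAt p₂ (-(q₂ s) - F (q₂ s)) s)
    (t : ℝ) (ht : 0 < t) (htL : t ^ 2 * (1 + L) ≤ 1) :
    ∀ s ∈ Icc (0:ℝ) t,
      ‖q₁ s - q₂ s - (x - y) - s • (v - u)‖ ≤
        t ^ 2 * (1 + L) * max ‖x - y‖ ‖x - y + t • (v - u)‖ := by
  set M : ℝ := max ‖x - y‖ ‖x - y + t • (v - u)‖ with hM
  have hM0 : 0 ≤ M := le_trans (norm_nonneg _) (le_max_left _ _)
  set e : ℝ → H := fun s => q₁ s - q₂ s - (x - y) - s • (v - u) with he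
  set e' : ℝ → H := fun s => p₁ s - p₂ s - (v - u) with he'
  have hde : ∀ s : ℝ, HasDerivAt e (e' s) s := by
    intro s
    have h1 : HasDerivAt (fun s : ℝ => s • (v - u)) ((1:ℝ) • (v - u)) s :=
      (hasDerivAt_id s).smul_const (v - u)
    rw [one_smul] at h1
    exact (((hq₁' s).sub (hq₂' s)).sub_const (x - y)).sub h1
  have hde' : ∀ s : ℝ, HasDerivAt e' (-(q₁ s - q₂ s) - (F (q₁ s) - F (q₂ s))) s := by
    intro s
    have h := ((hp₁' s).sub (hp₂' s)).sub_const (v - u : H)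
    have heq : -(q₁ s) - F (q₁ s) - (-(q₂ s) - F (q₂ s))
        = -(q₁ s - q₂ s) - (F (q₁ s) - F (q₂ s)) := by abel
    rw [heq] at h
    exact h
  -- bound on the linear interpolant
  have hlin : ∀ s ∈ Icc (0:ℝ) t, ‖(x - y) + s • (v - u)‖ ≤ M := by
    intro s hs
    have hst : s / t ∈ Icc (0:ℝ) 1 :=
      ⟨div_nonneg hs.1 ht.le, (div_le_one ht).2 hs.2⟩
    have key : (x - y) + s • (v - u)
        = (1 - s / t) • (x - y) + (s / t) • (x - y + t • (v - u)) := by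
      rw [smul_add, smul_smul, div_mul_cancel₀ _ ht.ne']
      module
    calc ‖(x - y) + s • (v - u)‖
        = ‖(1 - s / t) • (x - y) + (s / t) • (x - y + t • (v - u))‖ := by rw [key]
      _ ≤ (1 - s / t) * ‖x - y‖ + (s / t) * ‖x - y + t • (v - u)‖ := by
          refine (norm_add_le _ _).trans ?_
          rw [norm_smul, norm_smul, Real.norm_eq_abs, Real.norm_eq_abs,
            abs_of_nonneg (by linarith [hst.2]), abs_of_nonneg hst.1]
      _ ≤ (1 - s / t) * M + (s / t) * M :=
          add_le_add (mul_le_mul_of_nonneg_left (le_max_left _ _) (by linarith [hst.2]))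
            (mul_le_mul_of_nonneg_left (le_max_right _ _) hst.1)
      _ = M := by ring
  -- maximum of ‖e‖ on [0,t]
  have hce : Continuous e := continuous_iff_continuousAt.2 fun s => (hde s).continuousAt
  have hcont : ContinuousOn (fun s => ‖e s‖) (Icc (0:ℝ) t) :=
    (continuous_norm.comp hce).continuousOn
  obtain ⟨s₀, hs₀, hmax⟩ :=
    (isCompact_Icc).exists_isMaxOn (nonempty_Icc.2 ht.le) hcont
  set A : ℝ := ‖e s₀‖ with hA
  have hAle : ∀ s ∈ Icc (0:ℝ) t, ‖e s‖ ≤ A := fun s hs => hmax hs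
  have hA0 : 0 ≤ A := norm_nonneg _
  set C : ℝ := (1 + L) * (A + M) with hC
  have hC0 : 0 ≤ C := mul_nonneg (by linarith) (by linarith)
  have he0 : e 0 = 0 := by simp [he, hq₁0, hq₂0]
  have he'0 : e' 0 = 0 := by simp [he', hp₁0, hp₂0]
  -- bound on e''
  have hbdd : ∀ s ∈ Icc (0:ℝ) t, ‖-(q₁ s - q₂ s) - (F (q₁ s) - F (q₂ s))‖ ≤ C := by
    intro s hs
    have hq : ‖q₁ s - q₂ s‖ ≤ A + M := by
      have : q₁ s - q₂ s = e s + ((x - y) + s • (v - u)) := by simp [he]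
      rw [this]
      exact (norm_add_le _ _).trans (add_le_add (hAle s hs) (hlin s hs))
    calc ‖-(q₁ s - q₂ s) - (F (q₁ s) - F (q₂ s))‖
        ≤ ‖q₁ s - q₂ s‖ + L * ‖q₁ s - q₂ s‖ := by
          refine (norm_sub_le _ _).trans ?_
          rw [norm_neg]
          exact add_le_add le_rfl (hF _ _)
      _ = (1 + L) * ‖q₁ s - q₂ s‖ := by ring
      _ ≤ C := by rw [hC]; exact mul_le_mul_of_nonneg_left hq (by linarith)
  -- step 1 : ‖e' s‖ ≤ C * s
  have step1 : ∀ s ∈ Icc (0:ℝ) t, ‖e' s‖ ≤ C * s := by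
    intro s hs
    have h := Convex.norm_image_sub_le_of_norm_hasDerivWithin_le
      (f := e') (f' := fun s => -(q₁ s - q₂ s) - (F (q₁ s) - F (q₂ s))) (C := C)
      (fun r hr => (hde' r).hasDerivWithinAt) hbdd (convex_Icc 0 t)
      (left_mem_Icc.2 ht.le) hs
    rw [he'0, sub_zero, sub_zero, Real.norm_eq_abs, abs_of_nonneg hs.1] at h
    exact h
  -- step 2 : ‖e s‖ ≤ C * s^2 / 2
  have step2 : ∀ s ∈ Icc (0:ℝ) t, ‖e s‖ ≤ C * s ^ 2 / 2 := by
    have hB : ∀ s : ℝ, HasDerivAt (fun s => C * s ^ 2 / 2) (C * s) s := by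
      intro s
      have h : HasDerivAt (fun s : ℝ => C * s ^ 2 / 2) (C * (↑2 * s ^ 1) / 2) s :=
        ((hasDerivAt_pow 2 s).const_mul C).div_const 2
      convert h using 1
      ring
    intro s hs
    exact image_norm_le_of_norm_deriv_right_le_deriv_boundary
      (f := e) (f' := e')
      (fun r _ => ((hde r).continuousAt.continuousWithinAt))
      (fun r _ => (hde r).hasDerivWithinAt)
      (by simp [he0]) hB
      (fun r hr => step1 r ⟨hr.1, hr.2.le⟩) hs
  -- conclude
  have hAfinal : A ≤ t ^ 2 * (1 + L) * M := by
    have hs2 : s₀ ^ 2 ≤ t ^ 2 := by nlinarith [hs₀.1, hs₀.2]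
    have h1 : A ≤ C * t ^ 2 / 2 := by nlinarith [step2 s₀ hs₀, hC0]
    have h2 : C * t ^ 2 / 2 = t ^ 2 * (1 + L) * A / 2 + t ^ 2 * (1 + L) * M / 2 := by
      rw [hC]; ring
    have hP0 : 0 ≤ t ^ 2 * (1 + L) := mul_nonneg (sq_nonneg t) (by linarith)
    have h3 : t ^ 2 * (1 + L) * A ≤ A := by nlinarith
    linarith
  intro s hs
  exact (hAle s hs).trans hAfinal
end

section
/- Under the hypotheses of the previous statement, additionally with u = v (synchronous velocity coupling), one has max_{s ≤ t} ‖q(s; x, v) - q(s; y, v) - (x - y)‖ ≤ t²(1 + L) ‖x - y‖ and max_{s ≤ t} ‖q'(s; x, v) - q'(s; y, v)‖ ≤ 2 t (1 + L) ‖x - y‖. -/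
/-!
Put `δq = q₁ - q₂` and `δp = p₁ - p₂`. Then `δq' = δp`, `δp(0) = 0` and
`‖δp'‖ = ‖-δq - (F q₁ - F q₂)‖ ≤ (1 + L) ‖δq‖`. If `A` is the maximum of `‖δq‖` on `[0, t]`,
integrating twice gives `‖δp(s)‖ ≤ (1 + L) A s` and `‖δq(s) - δq(0)‖ ≤ (1 + L) A s² / 2 ≤ A / 2`.
Evaluating the second bound at a maximiser gives `A ≤ ‖x - y‖ + A / 2`, i.e. `A ≤ 2 ‖x - y‖`,
and substituting this back into both bounds proves the claim.
-/

open Set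

section SecondOrder

variable {E : Type*} [NormedAddCommGroup E] [NormedSpace ℝ E]

theorem norm_image_sub_le_of_norm_deriv_le_mul_self {f f' : ℝ → E} {C t : ℝ}
    (hf : ∀ r, HasDerivAt f (f' r) r) (bound : ∀ r ∈ Ico 0 t, ‖f' r‖ ≤ C * r) :
    ∀ s ∈ Icc 0 t, ‖f s - f 0‖ ≤ C * (s ^ 2 / 2) := by
  have hB (r : ℝ) : HasDerivAt (fun r => C * (r ^ 2 / 2)) (C * r) r :=
    (((hasDerivAt_pow 2 r).div_const 2).const_mul C).congr_deriv (by ring)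
  exact image_norm_le_of_norm_deriv_right_le_deriv_boundary
    (fun r _ => ((hf r).sub_const (f 0)).continuousAt.continuousWithinAt)
    (fun r _ => ((hf r).sub_const (f 0)).hasDerivWithinAt) (by simp) hB bound

variable {q p a : ℝ → E} {K t : ℝ}

theorem norm_le_and_norm_sub_le_of_hasDerivAt_of_norm_le
    (hq : ∀ r, HasDerivAt q (p r) r) (hp : ∀ r, HasDerivAt p (a r) r) (hp0 : p 0 = 0)
    (hK : 0 ≤ K) (ha : ∀ r ∈ Icc 0 t, ‖a r‖ ≤ K * ‖q r‖) {A : ℝ}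
    (hA : ∀ r ∈ Icc 0 t, ‖q r‖ ≤ A) :
    ∀ s ∈ Icc 0 t, ‖p s‖ ≤ K * A * s ∧ ‖q s - q 0‖ ≤ K * A * (s ^ 2 / 2) := by
  have hpA : ∀ s ∈ Icc 0 t, ‖p s‖ ≤ K * A * s := by
    intro s hs
    simpa [hp0] using norm_image_sub_le_of_norm_deriv_le_segment'
      (fun r _ => (hp r).hasDerivWithinAt)
      (fun r hr => (ha r (Ico_subset_Icc_self hr)).trans
        (mul_le_mul_of_nonneg_left (hA r (Ico_subset_Icc_self hr)) hK)) s hs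
  exact fun s hs => ⟨hpA s hs, norm_image_sub_le_of_norm_deriv_le_mul_self hq
    (fun r hr => (hpA r (Ico_subset_Icc_self hr)).trans_eq (by ring)) s hs⟩

theorem norm_le_two_mul_of_hasDerivAt_of_sq_mul_le_one
    (hq : ∀ r, HasDerivAt q (p r) r) (hp : ∀ r, HasDerivAt p (a r) r) (hp0 : p 0 = 0)
    (hK : 0 ≤ K) (ha : ∀ r ∈ Icc 0 t, ‖a r‖ ≤ K * ‖q r‖) (htK : t ^ 2 * K ≤ 1) :
    ∀ s ∈ Icc 0 t, ‖q s‖ ≤ 2 * ‖q 0‖ := by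
  intro s hs
  obtain ⟨s₀, hs₀, hmax⟩ := isCompact_Icc.exists_isMaxOn ⟨s, hs⟩
    (fun r _ => (hq r).continuousAt.continuousWithinAt.norm)
  have hA : ∀ r ∈ Icc 0 t, ‖q r‖ ≤ ‖q s₀‖ := fun r hr => hmax hr
  have hdisp := (norm_le_and_norm_sub_le_of_hasDerivAt_of_norm_le hq hp hp0 hK ha hA s₀ hs₀).2
  have hKs₀ : K * s₀ ^ 2 ≤ 1 := by
    nlinarith [pow_le_pow_left₀ hs₀.1 hs₀.2 2]
  have hhalf : K * ‖q s₀‖ * (s₀ ^ 2 / 2) ≤ ‖q s₀‖ / 2 := by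
    nlinarith [norm_nonneg (q s₀)]
  linarith [hA s hs, norm_sub_norm_le (q s₀) (q 0)]

theorem norm_sub_le_and_norm_le_of_hasDerivAt_of_sq_mul_le_one
    (hq : ∀ r, HasDerivAt q (p r) r) (hp : ∀ r, HasDerivAt p (a r) r) (hp0 : p 0 = 0)
    (hK : 0 ≤ K) (ha : ∀ r ∈ Icc 0 t, ‖a r‖ ≤ K * ‖q r‖) (htK : t ^ 2 * K ≤ 1) :
    (∀ s ∈ Icc 0 t, ‖q s - q 0‖ ≤ t ^ 2 * K * ‖q 0‖) ∧
    (∀ s ∈ Icc 0 t, ‖p s‖ ≤ 2 * t * K * ‖q 0‖) := by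
  have hA := norm_le_two_mul_of_hasDerivAt_of_sq_mul_le_one hq hp hp0 hK ha htK
  have hbounds := norm_le_and_norm_sub_le_of_hasDerivAt_of_norm_le hq hp hp0 hK ha hA
  have hKq : 0 ≤ K * (2 * ‖q 0‖) := by positivity
  refine ⟨fun s hs => (hbounds s hs).2.trans ?_, fun s hs => (hbounds s hs).1.trans ?_⟩
  · nlinarith [pow_le_pow_left₀ hs.1 hs.2 2]
  · nlinarith [hs.2]

end SecondOrder

theorem stmt_12_general {H : Type*} [NormedAddCommGroup H] [NormedSpace ℝ H]
    (F : H → H) (L : ℝ) (hL : 0 ≤ L)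
    (hF : ∀ a b : H, ‖F a - F b‖ ≤ L * ‖a - b‖)
    (q₁ p₁ q₂ p₂ : ℝ → H) (x y v : H)
    (hq₁0 : q₁ 0 = x) (hp₁0 : p₁ 0 = v) (hq₂0 : q₂ 0 = y) (hp₂0 : p₂ 0 = v)
    (hq₁' : ∀ s : ℝ, HasDerivAt q₁ (p₁ s) s)
    (hp₁' : ∀ s : ℝ, HasDerivAt p₁ (-(q₁ s) - F (q₁ s)) s)
    (hq₂' : ∀ s : ℝ, HasDerivAt q₂ (p₂ s) s)
    (hp₂' : ∀ s : ℝ, HasDerivAt p₂ (-(q₂ s) - F (q₂ s)) s)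
    (t : ℝ) (htL : t ^ 2 * (1 + L) ≤ 1) :
    (∀ s ∈ Icc (0:ℝ) t, ‖q₁ s - q₂ s - (x - y)‖ ≤ t ^ 2 * (1 + L) * ‖x - y‖) ∧
    (∀ s ∈ Icc (0:ℝ) t, ‖p₁ s - p₂ s‖ ≤ 2 * t * (1 + L) * ‖x - y‖) := by
  have hforce (s : ℝ) :
      ‖-(q₁ s) - F (q₁ s) - (-(q₂ s) - F (q₂ s))‖ ≤ (1 + L) * ‖q₁ s - q₂ s‖ :=
    calc ‖-(q₁ s) - F (q₁ s) - (-(q₂ s) - F (q₂ s))‖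
        = ‖-(q₁ s - q₂ s) - (F (q₁ s) - F (q₂ s))‖ := by congr 1; abel
      _ ≤ ‖q₁ s - q₂ s‖ + L * ‖q₁ s - q₂ s‖ := (norm_sub_le _ _).trans
          (add_le_add (norm_neg _).le (hF _ _))
      _ = (1 + L) * ‖q₁ s - q₂ s‖ := by ring
  have h := norm_sub_le_and_norm_le_of_hasDerivAt_of_sq_mul_le_one
    (q := fun s => q₁ s - q₂ s) (p := fun s => p₁ s - p₂ s)
    (fun s => (hq₁' s).sub (hq₂' s)) (fun s => (hp₁' s).sub (hp₂' s))
    (by simp [hp₁0, hp₂0]) (by linarith) (fun s _ => hforce s) htL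
  simpa only [hq₁0, hq₂0] using h

theorem stmt_12 {H : Type*} [NormedAddCommGroup H] [NormedSpace ℝ H]
    (F : H → H) (L : ℝ) (hL : 0 ≤ L)
    (hF : ∀ a b : H, ‖F a - F b‖ ≤ L * ‖a - b‖)
    (q₁ p₁ q₂ p₂ : ℝ → H) (x y v : H)
    (hq₁0 : q₁ 0 = x) (hp₁0 : p₁ 0 = v) (hq₂0 : q₂ 0 = y) (hp₂0 : p₂ 0 = v)
    (hq₁' : ∀ s : ℝ, HasDerivAt q₁ (p₁ s) s)
    (hp₁' : ∀ s : ℝ, HasDerivAt p₁ (-(q₁ s) - F (q₁ s)) s)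
    (hq₂' : ∀ s : ℝ, HasDerivAt q₂ (p₂ s) s)
    (hp₂' : ∀ s : ℝ, HasDerivAt p₂ (-(q₂ s) - F (q₂ s)) s)
    (t : ℝ) (ht : 0 < t) (htL : t ^ 2 * (1 + L) ≤ 1) :
    (∀ s ∈ Icc (0:ℝ) t, ‖q₁ s - q₂ s - (x - y)‖ ≤ t ^ 2 * (1 + L) * ‖x - y‖) ∧
    (∀ s ∈ Icc (0:ℝ) t, ‖p₁ s - p₂ s‖ ≤ 2 * t * (1 + L) * ‖x - y‖) :=
  stmt_12_general F L hL hF q₁ p₁ q₂ p₂ x y v hq₁0 hp₁0 hq₂0 hp₂0 hq₁' hp₁' hq₂' hp₂' t htL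
end

section
/- Let H be a real Hilbert space and F : H → H satisfy ⟨x - y, x - y⟩ + ⟨F(x) - F(y), x - y⟩ ≥ ζ‖x - y‖² for some ζ > 0, and ‖F(x) - F(y)‖ ≤ L‖x - y‖ with ζ ≤ L + 1. Let q(·; x, v) solve q'' = -q - F(q), q(0) = x, q'(0) = v. If t > 0 satisfies t²(1 + L) ≤ ζ/(1 + L), then ‖q(t; x, v) - q(t; y, v)‖² ≤ (1 - ζ t²/12) ‖x - y‖² for all x, y, v ∈ H. -/
/-!
The difference `z = q₁ - q₂` of the two coupled trajectories solves `z'' = a` with `z'(0) = 0`,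
`‖a‖ ≤ M ‖z‖` for `M = 1 + L`, and `⟪z, a⟫ ≤ -ζ ‖z‖²`. Grönwall applied to `(√M z, z')` keeps
`‖z‖ ≤ 3 ‖z 0‖` up to time `t` because `√M t ≤ 1`; feeding this back twice gives
`‖z s - z 0‖ ≤ (3/2) M ‖z 0‖ s²` and `‖z' s‖ ≤ (3/2) M ‖z 0‖ s`. Hence
`(‖z‖²)'' = 2 (⟪z, a⟫ + ‖z'‖²) ≤ -2ζ ‖z 0‖² + O(s²)`, and integrating twice yields
`‖z t‖² ≤ (1 - ζ t² / 8) ‖z 0‖²` once `M² t² ≤ ζ`.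
-/

open Set Real

section Comparison

variable {E : Type*} [NormedAddCommGroup E] [NormedSpace ℝ E] {t : ℝ}

theorem le_of_deriv_le_of_hasDerivAt {f f' B B' : ℝ → ℝ} (hf : ∀ s, HasDerivAt f (f' s) s)
    (hB : ∀ s, HasDerivAt B (B' s) s) (h0 : f 0 ≤ B 0) (bound : ∀ s ∈ Ico 0 t, f' s ≤ B' s) :
    ∀ s ∈ Icc 0 t, f s ≤ B s := fun _ hs =>
  image_le_of_deriv_right_le_deriv_boundary
    (fun s _ => (hf s).continuousAt.continuousWithinAt) (fun s _ => (hf s).hasDerivWithinAt) h0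
    (fun s _ => (hB s).continuousAt.continuousWithinAt) (fun s _ => (hB s).hasDerivWithinAt)
    bound hs

theorem norm_le_of_norm_deriv_le_of_hasDerivAt {f f' : ℝ → E} {B B' : ℝ → ℝ}
    (hf : ∀ s, HasDerivAt f (f' s) s) (hB : ∀ s, HasDerivAt B (B' s) s) (h0 : ‖f 0‖ ≤ B 0)
    (bound : ∀ s ∈ Ico 0 t, ‖f' s‖ ≤ B' s) : ∀ s ∈ Icc 0 t, ‖f s‖ ≤ B s := fun _ hs =>
  image_norm_le_of_norm_deriv_right_le_deriv_boundary
    (fun s _ => (hf s).continuousAt.continuousWithinAt) (fun s _ => (hf s).hasDerivWithinAt) h0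
    hB bound hs

end Comparison

theorem sq_norm_sub_two_mul_le_sq_norm {E : Type*} [SeminormedAddCommGroup E] {u v : E} {ε : ℝ}
    (h : ‖u - v‖ ≤ ε) : ‖v‖ ^ 2 - 2 * ‖v‖ * ε ≤ ‖u‖ ^ 2 := by
  have := norm_le_norm_add_norm_sub' v u
  rw [norm_sub_rev] at this
  nlinarith [mul_le_mul_of_nonneg_left (h.trans' (by linarith) : ‖v‖ - ‖u‖ ≤ ε) (norm_nonneg v),
    sq_nonneg (‖u‖ - ‖v‖)]

section SecondOrder

variable {E : Type*} [NormedAddCommGroup E] [NormedSpace ℝ E] {z w a : ℝ → E} {M t : ℝ}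

theorem norm_le_three_mul_norm_apply_zero (hz : ∀ s, HasDerivAt z (w s) s)
    (hw : ∀ s, HasDerivAt w (a s) s) (ha : ∀ s, ‖a s‖ ≤ M * ‖z s‖) (hw0 : w 0 = 0)
    (hM : 0 < M) (hMt : M * t ^ 2 ≤ 1) : ∀ s ∈ Icc 0 t, ‖z s‖ ≤ 3 * ‖z 0‖ := by
  set r := √M
  have hr : 0 < r := sqrt_pos.2 hM
  have hr2 : r * r = M := mul_self_sqrt hM.le
  have hrt : r * t ≤ 1 := by
    nlinarith [sq_nonneg (r * t - 1), sq_nonneg (r * t + 1)]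
  -- In the sup norm on `E × E`, `‖(r • w, a)‖ ≤ r ‖(r • z, w)‖`: Grönwall with rate `r = √M`.
  have hg : ∀ s, HasDerivAt (fun s => (r • z s, w s)) (r • w s, a s) s := fun s =>
    ((hz s).const_smul r).prodMk (hw s)
  have hnorm : ∀ s, ‖(r • z s, w s)‖ = max (r * ‖z s‖) ‖w s‖ := fun s => by
    rw [Prod.norm_def, norm_smul, norm_of_nonneg hr.le]
  have gronwall := norm_le_gronwallBound_of_norm_deriv_right_le (a := 0) (b := t)
    (δ := r * ‖z 0‖) (ε := 0)
    (fun s _ => (hg s).continuousAt.continuousWithinAt) (fun s _ => (hg s).hasDerivWithinAt)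
    (by rw [hnorm, hw0, norm_zero, max_eq_left (by positivity)])
    fun s _ => by
      rw [Prod.norm_def, norm_smul, norm_of_nonneg hr.le, hnorm, add_zero]
      refine max_le (mul_le_mul_of_nonneg_left (le_max_right _ _) hr.le) ?_
      calc ‖a s‖ ≤ r * (r * ‖z s‖) := by rw [← mul_assoc, hr2]; exact ha s
        _ ≤ r * max (r * ‖z s‖) ‖w s‖ := mul_le_mul_of_nonneg_left (le_max_left _ _) hr.le
  intro s hs
  have hexp : exp (r * s) ≤ 3 := calc
    exp (r * s) ≤ exp 1 := exp_le_exp.2 ((mul_le_mul_of_nonneg_left hs.2 hr.le).trans hrt)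
    _ ≤ 3 := by linarith [exp_one_lt_d9]
  have := gronwall s hs
  rw [gronwallBound_ε0, hnorm, sub_zero] at this
  refine le_of_mul_le_mul_left ?_ hr
  calc r * ‖z s‖ ≤ r * ‖z 0‖ * exp (r * s) := (le_max_left _ _).trans this
    _ ≤ r * ‖z 0‖ * 3 := by gcongr
    _ = r * (3 * ‖z 0‖) := by ring

theorem norm_sub_apply_zero_le (hz : ∀ s, HasDerivAt z (w s) s)
    (hw : ∀ s, HasDerivAt w (a s) s) (ha : ∀ s, ‖a s‖ ≤ M * ‖z s‖) (hw0 : w 0 = 0)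
    (hM : 0 < M) (hMt : M * t ^ 2 ≤ 1) :
    ∀ s ∈ Icc 0 t, ‖z s - z 0‖ ≤ 3 / 2 * M * ‖z 0‖ * s ^ 2 := by
  have hz3 := norm_le_three_mul_norm_apply_zero hz hw ha hw0 hM hMt
  have hw3 : ∀ s ∈ Icc 0 t, ‖w s‖ ≤ 3 * M * ‖z 0‖ * s :=
    norm_le_of_norm_deriv_le_of_hasDerivAt hw
      (fun s => (hasDerivAt_id s).const_mul (3 * M * ‖z 0‖)) (by simp [hw0]) fun s hs =>
        calc ‖a s‖ ≤ M * (3 * ‖z 0‖) :=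
              (ha s).trans (mul_le_mul_of_nonneg_left (hz3 s (Ico_subset_Icc_self hs)) hM.le)
          _ = 3 * M * ‖z 0‖ * 1 := by ring
  refine norm_le_of_norm_deriv_le_of_hasDerivAt (fun s => (hz s).sub_const (z 0))
    (fun s => (hasDerivAt_pow 2 s).const_mul (3 / 2 * M * ‖z 0‖)) (by simp) fun s hs =>
      (hw3 s (Ico_subset_Icc_self hs)).trans_eq (by norm_num; ring)

theorem norm_velocity_le (hz : ∀ s, HasDerivAt z (w s) s)
    (hw : ∀ s, HasDerivAt w (a s) s) (ha : ∀ s, ‖a s‖ ≤ M * ‖z s‖) (hw0 : w 0 = 0)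
    (hM : 0 < M) (hMt : M * t ^ 2 ≤ 1) :
    ∀ s ∈ Icc 0 t, ‖w s‖ ≤ 3 / 2 * M * ‖z 0‖ * s := by
  set D := ‖z 0‖
  have hzD : ∀ s ∈ Icc 0 t, ‖z s‖ ≤ D + 3 / 2 * M * D * s ^ 2 := fun s hs => by
    linarith [norm_le_norm_add_norm_sub' (z s) (z 0),
      norm_sub_apply_zero_le hz hw ha hw0 hM hMt s hs]
  have hB : ∀ s, HasDerivAt (fun s => M * D * s + M ^ 2 * D / 2 * s ^ 3)
      (M * D + 3 / 2 * M ^ 2 * D * s ^ 2) s := fun s =>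
    (((hasDerivAt_id' s).const_mul _).add ((hasDerivAt_pow 3 s).const_mul _)).congr_deriv
      (by norm_num; ring)
  intro s hs
  have hcubic := norm_le_of_norm_deriv_le_of_hasDerivAt hw hB (by simp [hw0]) (fun r hr =>
    calc ‖a r‖ ≤ M * (D + 3 / 2 * M * D * r ^ 2) :=
          (ha r).trans (mul_le_mul_of_nonneg_left (hzD r (Ico_subset_Icc_self hr)) hM.le)
      _ = M * D + 3 / 2 * M ^ 2 * D * r ^ 2 := by ring) s hs
  have hMs : M * s ^ 2 ≤ 1 :=
    (mul_le_mul_of_nonneg_left (pow_le_pow_left₀ hs.1 hs.2 2) hM.le).trans hMt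
  nlinarith [mul_nonneg (mul_nonneg (mul_nonneg hM.le (norm_nonneg (z 0))) hs.1) (sub_nonneg.2 hMs)]

end SecondOrder

theorem sq_norm_le_of_inner_le {E : Type*} [NormedAddCommGroup E] [InnerProductSpace ℝ E]
    {z w a : ℝ → E} {M ζ t : ℝ} (hz : ∀ s, HasDerivAt z (w s) s)
    (hw : ∀ s, HasDerivAt w (a s) s) (ha : ∀ s, ‖a s‖ ≤ M * ‖z s‖)
    (hinner : ∀ s, inner ℝ (z s) (a s) ≤ -ζ * ‖z s‖ ^ 2) (hw0 : w 0 = 0)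
    (hM : 0 < M) (hMt : M * t ^ 2 ≤ 1) (hM2t : M ^ 2 * t ^ 2 ≤ ζ) (ht : 0 ≤ t) :
    ‖z t‖ ^ 2 ≤ (1 - ζ * t ^ 2 / 8) * ‖z 0‖ ^ 2 := by
  set D := ‖z 0‖
  have hζ : 0 ≤ ζ := hM2t.trans' (by positivity)
  set c := 3 * ζ * M * D ^ 2 + 9 / 4 * M ^ 2 * D ^ 2
  have hzw : ∀ s ∈ Icc 0 t, inner ℝ (z s) (w s) ≤ -ζ * D ^ 2 * s + c / 3 * s ^ 3 := by
    have hB : ∀ s, HasDerivAt (fun s => -ζ * D ^ 2 * s + c / 3 * s ^ 3)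
        (-ζ * D ^ 2 + c * s ^ 2) s := fun s =>
      (((hasDerivAt_id' s).const_mul _).add ((hasDerivAt_pow 3 s).const_mul _)).congr_deriv
        (by norm_num; ring)
    refine le_of_deriv_le_of_hasDerivAt (fun s => (hz s).inner ℝ (hw s)) hB (by simp [hw0])
      fun s hs => ?_
    have hs' := Ico_subset_Icc_self hs
    have hzs : D ^ 2 - 3 * M * D ^ 2 * s ^ 2 ≤ ‖z s‖ ^ 2 := by
      have := sq_norm_sub_two_mul_le_sq_norm (norm_sub_apply_zero_le hz hw ha hw0 hM hMt s hs')
      linarith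
    have hws : ‖w s‖ ^ 2 ≤ 9 / 4 * M ^ 2 * D ^ 2 * s ^ 2 := by
      have := pow_le_pow_left₀ (norm_nonneg _) (norm_velocity_le hz hw ha hw0 hM hMt s hs') 2
      linarith
    calc inner ℝ (z s) (a s) + inner ℝ (w s) (w s)
        ≤ -ζ * ‖z s‖ ^ 2 + ‖w s‖ ^ 2 := by rw [real_inner_self_eq_norm_sq]; linarith [hinner s]
      _ ≤ -ζ * (D ^ 2 - 3 * M * D ^ 2 * s ^ 2) + 9 / 4 * M ^ 2 * D ^ 2 * s ^ 2 := by
        nlinarith [mul_le_mul_of_nonneg_left hzs hζ]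
      _ = -ζ * D ^ 2 + c * s ^ 2 := by ring
  have hB : ∀ s, HasDerivAt (fun s => D ^ 2 - ζ * D ^ 2 * s ^ 2 + c / 6 * s ^ 4)
      (2 * (-ζ * D ^ 2 * s + c / 3 * s ^ 3)) s := fun s =>
    (((hasDerivAt_const s _).sub ((hasDerivAt_pow 2 s).const_mul _)).add
      ((hasDerivAt_pow 4 s).const_mul _)).congr_deriv (by norm_num; ring)
  have hzz := le_of_deriv_le_of_hasDerivAt (fun s => (hz s).norm_sq) hB (by simp [D])
    (fun s hs => by linarith [hzw s (Ico_subset_Icc_self hs)]) t ⟨ht, le_rfl⟩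
  have hc : c / 6 * t ^ 4 ≤ 7 / 8 * ζ * D ^ 2 * t ^ 2 := by
    have h1 : M ^ 2 * t ^ 2 * (t ^ 2 * D ^ 2) ≤ ζ * (t ^ 2 * D ^ 2) := by gcongr
    have h2 : M * t ^ 2 * (ζ * t ^ 2 * D ^ 2) ≤ 1 * (ζ * t ^ 2 * D ^ 2) := by gcongr
    simp only [c]
    linarith
  linarith

theorem stmt_13_general {H : Type*} [NormedAddCommGroup H] [InnerProductSpace ℝ H]
    (F : H → H) (ζ L : ℝ) (hζ : 0 < ζ) (hζL : ζ ≤ L + 1)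
    (hmono : ∀ a b : H,
      (inner ℝ (a - b) (a - b) : ℝ) + (inner ℝ (F a - F b) (a - b) : ℝ) ≥ ζ * ‖a - b‖ ^ 2)
    (hF : ∀ a b : H, ‖F a - F b‖ ≤ L * ‖a - b‖)
    (q₁ p₁ q₂ p₂ : ℝ → H) (x y v : H)
    (hq₁0 : q₁ 0 = x) (hp₁0 : p₁ 0 = v) (hq₂0 : q₂ 0 = y) (hp₂0 : p₂ 0 = v)
    (hq₁' : ∀ s : ℝ, HasDerivAt q₁ (p₁ s) s)
    (hp₁' : ∀ s : ℝ, HasDerivAt p₁ (-(q₁ s) - F (q₁ s)) s)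
    (hq₂' : ∀ s : ℝ, HasDerivAt q₂ (p₂ s) s)
    (hp₂' : ∀ s : ℝ, HasDerivAt p₂ (-(q₂ s) - F (q₂ s)) s)
    (t : ℝ) (ht : 0 < t) (htL : t ^ 2 * (1 + L) ≤ ζ / (1 + L)) :
    ‖q₁ t - q₂ t‖ ^ 2 ≤ (1 - ζ * t ^ 2 / 12) * ‖x - y‖ ^ 2 := by
  have hM : 0 < 1 + L := by linarith
  have hM2t : (1 + L) ^ 2 * t ^ 2 ≤ ζ := by
    rw [le_div_iff₀ hM] at htL
    linarith
  have hMt : (1 + L) * t ^ 2 ≤ 1 :=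
    le_of_mul_le_mul_left (by linarith) hM
  have key := sq_norm_le_of_inner_le (z := fun s => q₁ s - q₂ s) (w := fun s => p₁ s - p₂ s)
    (a := fun s => -(q₁ s - q₂ s) - (F (q₁ s) - F (q₂ s)))
    (fun s => (hq₁' s).sub (hq₂' s))
    (fun s => ((hp₁' s).sub (hp₂' s)).congr_deriv (by abel))
    (fun s => (norm_sub_le _ _).trans (by rw [norm_neg]; linarith [hF (q₁ s) (q₂ s)]))
    (fun s => by
      rw [inner_sub_right, inner_neg_right, real_inner_comm (F _ - F _)]
      linarith [hmono (q₁ s) (q₂ s)])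
    (by simp [hp₁0, hp₂0]) hM hMt hM2t ht.le
  simp only [hq₁0, hq₂0] at key
  exact key.trans (by gcongr; linarith [sq_nonneg t])

theorem stmt_13 {H : Type*} [NormedAddCommGroup H] [InnerProductSpace ℝ H]
    (F : H → H) (ζ L : ℝ) (hζ : 0 < ζ) (hL : 0 ≤ L) (hζL : ζ ≤ L + 1)
    (hmono : ∀ a b : H,
      (inner ℝ (a - b) (a - b) : ℝ) + (inner ℝ (F a - F b) (a - b) : ℝ) ≥ ζ * ‖a - b‖ ^ 2)
    (hF : ∀ a b : H, ‖F a - F b‖ ≤ L * ‖a - b‖)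
    (q₁ p₁ q₂ p₂ : ℝ → H) (x y v : H)
    (hq₁0 : q₁ 0 = x) (hp₁0 : p₁ 0 = v) (hq₂0 : q₂ 0 = y) (hp₂0 : p₂ 0 = v)
    (hq₁' : ∀ s : ℝ, HasDerivAt q₁ (p₁ s) s)
    (hp₁' : ∀ s : ℝ, HasDerivAt p₁ (-(q₁ s) - F (q₁ s)) s)
    (hq₂' : ∀ s : ℝ, HasDerivAt q₂ (p₂ s) s)
    (hp₂' : ∀ s : ℝ, HasDerivAt p₂ (-(q₂ s) - F (q₂ s)) s)
    (t : ℝ) (ht : 0 < t) (htL : t ^ 2 * (1 + L) ≤ ζ / (1 + L)) :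
    ‖q₁ t - q₂ t‖ ^ 2 ≤ (1 - ζ * t ^ 2 / 12) * ‖x - y‖ ^ 2 :=
  stmt_13_general F ζ L hζ hζL hmono hF q₁ p₁ q₂ p₂ x y v hq₁0 hp₁0 hq₂0 hp₂0 hq₁' hp₁' hq₂' hp₂' t
    ht htL
end

section
/- Let H be a real Hilbert space, F : H → H as in the previous statement (ζ-monotone perturbation, L-Lipschitz, ζ ≤ L + 1), and T > 0 with T²(1 + L) ≤ ζ/(1 + L). Define the exact preconditioned HMC transition x'(x, v) = position component of the flow of q'' = -q - F(q) at time T started at (x, v). Then for v ~ any probability distribution on H, E[‖x'(x, v) - x'(y, v)‖] ≤ (1 - ζT²/27) ‖x - y‖ for all x, y ∈ H. -/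
/-
The difference `z = q x v - q y v` of two trajectories with the same initial velocity solves
`z'' = φ`, `z'(0) = 0`, with `‖φ‖ ≤ K ‖z‖` and `⟪z, φ⟫ ≤ -ζ ‖z‖²` for `K = 1 + L`. Taylor's formula
`z(s) - z(0) = ∫₀ˢ (s - u) φ(u) du`, used only after pairing with a fixed vector (so `H` need not
be complete), bounds `‖z‖` by `2 ‖z(0)‖` on `[0, T]` (look at a maximum point, using `K T² ≤ 1`);
fed back into Taylor's formula this gives `‖z(s) - z(0)‖ ≤ (1/2 + 1/12) K ‖z(0)‖ s²`.
In `‖z(T)‖² = ‖z(0)‖² + 2 ⟪z(0), z(T) - z(0)⟫ + ‖z(T) - z(0)‖²`, monotonicity at `z(u)`, which is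
close to `z(0)`, makes the cross term at most `-ζ T² ‖z(0)‖² / 2` up to errors of order
`K² T⁴ ≤ ζ T²`; this yields `‖z(T)‖² ≤ (1 - ζ T² / 12) ‖z(0)‖²`. The resulting pathwise
contraction holds for every `v`.
-/

open MeasureTheory intervalIntegral Set
open scoped RealInnerProductSpace

theorem intervalIntegral_sub_mul_quadratic (s α β : ℝ) :
    ∫ u in (0 : ℝ)..s, (s - u) * (α + β * u ^ 2) = α * s ^ 2 / 2 + β * s ^ 4 / 12 := by
  have hderiv : ∀ u ∈ uIcc (0 : ℝ) s, HasDerivAt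
      (fun u : ℝ => s * α * u + s * β / 3 * u ^ 3 - α / 2 * u ^ 2 - β / 4 * u ^ 4)
      ((s - u) * (α + β * u ^ 2)) u := fun u _ => by
    refine (((((hasDerivAt_id u).const_mul (s * α)).add
      ((hasDerivAt_pow 3 u).const_mul (s * β / 3))).sub
      ((hasDerivAt_pow 2 u).const_mul (α / 2))).sub
      ((hasDerivAt_pow 4 u).const_mul (β / 4))).congr_deriv ?_
    push_cast
    ring
  rw [integral_eq_sub_of_hasDerivAt hderiv ((by fun_prop : Continuous _).intervalIntegrable _ _)]
  ring

theorem mul_sq_le_one_of_sq_mul_sq_le {ζ K T : ℝ} (hζK : ζ ≤ K) (hKT : K ^ 2 * T ^ 2 ≤ ζ) :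
    K * T ^ 2 ≤ 1 := by
  nlinarith

section SecondOrder

variable {E : Type*} [NormedAddCommGroup E] [InnerProductSpace ℝ E] {z v φ : ℝ → E}

theorem inner_le_of_norm_sub_le {x y w : E} {ζ K ε : ℝ} (hζ : 0 ≤ ζ) (hζK : ζ ≤ K)
    (hy : ⟪y, w⟫ ≤ -(ζ * ‖y‖ ^ 2)) (hw : ‖w‖ ≤ K * ‖y‖) (hε : ‖y - x‖ ≤ ε) :
    ⟪x, w⟫ ≤ -(ζ * ‖x‖ ^ 2) + K * ε * (3 * ‖x‖ + ε) := by
  have hsplit : ⟪x, w⟫ = ⟪y, w⟫ - ⟪y - x, w⟫ := by rw [inner_sub_left]; ring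
  have hcross : -⟪y - x, w⟫ ≤ ε * (K * ‖y‖) :=
    (neg_le_abs _).trans <| (abs_real_inner_le_norm _ _).trans <|
      mul_le_mul hε hw (norm_nonneg _) ((norm_nonneg _).trans hε)
  have hy_le : ‖y‖ ≤ ‖x‖ + ε := by linarith [norm_le_norm_add_norm_sub' y x]
  have hx_le : ‖x‖ - ε ≤ ‖y‖ := by linarith [norm_le_norm_add_norm_sub' x y, norm_sub_rev x y]
  have hsq : ‖x‖ ^ 2 - 2 * ‖x‖ * ε ≤ ‖y‖ ^ 2 := by
    rcases le_total ε ‖x‖ with h | h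
    · nlinarith [pow_le_pow_left₀ (sub_nonneg.2 h) hx_le 2]
    · nlinarith [norm_nonneg x, norm_nonneg y]
  have hK : 0 ≤ K := hζ.trans hζK
  have hε0 : 0 ≤ ε := (norm_nonneg _).trans hε
  nlinarith [mul_le_mul_of_nonneg_left hsq hζ, mul_le_mul_of_nonneg_left hy_le (mul_nonneg hK hε0),
    mul_le_mul_of_nonneg_right hζK (mul_nonneg (norm_nonneg x) hε0)]

theorem inner_sub_eq_add_integral (hz : ∀ s, HasDerivAt z (v s) s)
    (hv : ∀ s, HasDerivAt v (φ s) s) (hφ : Continuous φ) (w : E) (s : ℝ) :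
    ⟪w, z s - z 0⟫ = s * ⟪w, v 0⟫ + ∫ u in (0 : ℝ)..s, (s - u) * ⟪w, φ u⟫ := by
  have hderiv : ∀ u ∈ uIcc (0 : ℝ) s,
      HasDerivAt (fun u => ⟪w, z u⟫ + (s - u) * ⟪w, v u⟫) ((s - u) * ⟪w, φ u⟫) u := fun u _ => by
    have hzw := (hasDerivAt_const u w).inner ℝ (hz u)
    have hvw := (hasDerivAt_const u w).inner ℝ (hv u)
    refine (hzw.add (((hasDerivAt_id u).const_sub s).mul hvw)).congr_deriv ?_
    simp
  rw [integral_eq_sub_of_hasDerivAt hderiv ((by fun_prop : Continuous _).intervalIntegrable _ _)]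
  simp only [inner_sub_right, sub_self, zero_mul, add_zero, sub_zero]
  ring

theorem inner_sub_le_of_inner_le (hz : ∀ s, HasDerivAt z (v s) s)
    (hv : ∀ s, HasDerivAt v (φ s) s) (hφ : Continuous φ) (hv0 : v 0 = 0) {w : E} {s α β : ℝ}
    (hs : 0 ≤ s) (hbound : ∀ u ∈ Icc 0 s, ⟪w, φ u⟫ ≤ α + β * u ^ 2) :
    ⟪w, z s - z 0⟫ ≤ α * s ^ 2 / 2 + β * s ^ 4 / 12 := by
  rw [inner_sub_eq_add_integral hz hv hφ, hv0, inner_zero_right, mul_zero, zero_add,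
    ← intervalIntegral_sub_mul_quadratic]
  refine integral_mono_on hs ((by fun_prop : Continuous _).intervalIntegrable _ _)
    ((by fun_prop : Continuous _).intervalIntegrable _ _) fun u hu => ?_
  exact mul_le_mul_of_nonneg_left (hbound u hu) (sub_nonneg.2 hu.2)

theorem norm_sub_le_of_norm_le (hz : ∀ s, HasDerivAt z (v s) s)
    (hv : ∀ s, HasDerivAt v (φ s) s) (hφ : Continuous φ) (hv0 : v 0 = 0) {s α β : ℝ}
    (hs : 0 ≤ s) (hbound : ∀ u ∈ Icc 0 s, ‖φ u‖ ≤ α + β * u ^ 2) :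
    ‖z s - z 0‖ ≤ α * s ^ 2 / 2 + β * s ^ 4 / 12 := by
  set Δ := z s - z 0
  have hnonneg : 0 ≤ α * s ^ 2 / 2 + β * s ^ 4 / 12 := by
    simpa using inner_sub_le_of_inner_le hz hv hφ hv0 (w := 0) hs fun u hu =>
      (inner_zero_left (φ u)).trans_le ((norm_nonneg _).trans (hbound u hu))
  have hsq : ‖Δ‖ ^ 2 ≤ ‖Δ‖ * (α * s ^ 2 / 2 + β * s ^ 4 / 12) := by
    rw [← real_inner_self_eq_norm_sq]
    calc ⟪Δ, Δ⟫ ≤ ‖Δ‖ * α * s ^ 2 / 2 + ‖Δ‖ * β * s ^ 4 / 12 :=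
          inner_sub_le_of_inner_le hz hv hφ hv0 hs fun u hu => by
            have := (real_inner_le_norm Δ (φ u)).trans
              (mul_le_mul_of_nonneg_left (hbound u hu) (norm_nonneg Δ))
            linarith
      _ = ‖Δ‖ * (α * s ^ 2 / 2 + β * s ^ 4 / 12) := by ring
  nlinarith [norm_nonneg Δ]

theorem norm_le_two_mul_of_norm_le_mul (hz : ∀ s, HasDerivAt z (v s) s)
    (hv : ∀ s, HasDerivAt v (φ s) s) (hφ : Continuous φ) (hv0 : v 0 = 0) {K T : ℝ}
    (hK : 0 ≤ K) (hT : 0 ≤ T) (hKT : K * T ^ 2 ≤ 1) (hφz : ∀ u, ‖φ u‖ ≤ K * ‖z u‖) :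
    ∀ s ∈ Icc 0 T, ‖z s‖ ≤ 2 * ‖z 0‖ := by
  have hzc : Continuous z := continuous_iff_continuousAt.2 fun s => (hz s).continuousAt
  obtain ⟨s₀, hs₀, hmax⟩ := isCompact_Icc.exists_isMaxOn (nonempty_Icc.2 hT)
    hzc.norm.continuousOn
  have hdisp : ‖z s₀ - z 0‖ ≤ K * ‖z s₀‖ * s₀ ^ 2 / 2 + 0 * s₀ ^ 4 / 12 :=
    norm_sub_le_of_norm_le hz hv hφ hv0 hs₀.1 fun u hu => by
      have := mul_le_mul_of_nonneg_left (hmax ⟨hu.1, hu.2.trans hs₀.2⟩) hK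
      linarith [hφz u]
  have hKs₀ : K * s₀ ^ 2 ≤ 1 := (mul_le_mul_of_nonneg_left
    (pow_le_pow_left₀ hs₀.1 hs₀.2 2) hK).trans hKT
  have hmax₀ : ‖z s₀‖ ≤ 2 * ‖z 0‖ := by
    nlinarith [norm_le_norm_add_norm_sub' (z s₀) (z 0), norm_nonneg (z s₀)]
  exact fun s hs => (hmax hs).trans hmax₀

theorem norm_sub_le_of_norm_le_mul (hz : ∀ s, HasDerivAt z (v s) s)
    (hv : ∀ s, HasDerivAt v (φ s) s) (hφ : Continuous φ) (hv0 : v 0 = 0) {K T : ℝ}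
    (hK : 0 ≤ K) (hT : 0 ≤ T) (hKT : K * T ^ 2 ≤ 1) (hφz : ∀ u, ‖φ u‖ ≤ K * ‖z u‖) :
    ∀ s ∈ Icc 0 T, ‖z s - z 0‖ ≤ 7 / 12 * K * ‖z 0‖ * s ^ 2 := by
  have hKs : ∀ s ∈ Icc 0 T, K * s ^ 2 ≤ 1 := fun s hs =>
    (mul_le_mul_of_nonneg_left (pow_le_pow_left₀ hs.1 hs.2 2) hK).trans hKT
  have hcrude : ∀ s ∈ Icc 0 T, ‖z s - z 0‖ ≤ K * ‖z 0‖ * s ^ 2 := fun s hs => by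
    have := norm_sub_le_of_norm_le hz hv hφ hv0 (α := K * (2 * ‖z 0‖)) (β := 0) hs.1 fun u hu =>
      (hφz u).trans <| by
        have := norm_le_two_mul_of_norm_le_mul hz hv hφ hv0 hK hT hKT hφz u ⟨hu.1, hu.2.trans hs.2⟩
        nlinarith
    linarith
  intro s hs
  have hrefined := norm_sub_le_of_norm_le hz hv hφ hv0 (α := K * ‖z 0‖) (β := K * (K * ‖z 0‖))
    hs.1 fun u hu => (hφz u).trans <| by
      have := hcrude u ⟨hu.1, hu.2.trans hs.2⟩
      nlinarith [norm_le_norm_add_norm_sub' (z u) (z 0)]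
  nlinarith [mul_le_mul_of_nonneg_right (hKs s hs) (by positivity : 0 ≤ K * ‖z 0‖ * s ^ 2)]

theorem norm_sq_le_of_inner_le_neg_mul (hz : ∀ s, HasDerivAt z (v s) s)
    (hv : ∀ s, HasDerivAt v (φ s) s) (hφ : Continuous φ) (hv0 : v 0 = 0) {ζ K T : ℝ}
    (hζK : ζ ≤ K) (hKT : K ^ 2 * T ^ 2 ≤ ζ) (hT : 0 ≤ T) (hφz : ∀ u, ‖φ u‖ ≤ K * ‖z u‖)
    (hmono : ∀ u, ⟪z u, φ u⟫ ≤ -(ζ * ‖z u‖ ^ 2)) :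
    ‖z T‖ ^ 2 ≤ (1 - ζ * T ^ 2 / 12) * ‖z 0‖ ^ 2 := by
  have hζ : 0 ≤ ζ := (by positivity : 0 ≤ K ^ 2 * T ^ 2).trans hKT
  have hK : 0 ≤ K := hζ.trans hζK
  have hKT₁ := mul_sq_le_one_of_sq_mul_sq_le hζK hKT
  have hdisp := norm_sub_le_of_norm_le_mul hz hv hφ hv0 hK hT hKT₁ hφz
  have hinner :
      ⟪z 0, z T - z 0⟫ ≤ -(ζ * ‖z 0‖ ^ 2) * T ^ 2 / 2 + 3 * K ^ 2 * ‖z 0‖ ^ 2 * T ^ 4 / 12 :=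
    inner_sub_le_of_inner_le hz hv hφ hv0 hT fun u hu => by
      have hKu : K * u ^ 2 ≤ 1 :=
        (mul_le_mul_of_nonneg_left (pow_le_pow_left₀ hu.1 hu.2 2) hK).trans hKT₁
      have := inner_le_of_norm_sub_le hζ hζK (hmono u) (hφz u) (hdisp u hu)
      have hpos : 0 ≤ K ^ 2 * ‖z 0‖ ^ 2 * u ^ 2 := by positivity
      nlinarith [mul_le_mul_of_nonneg_left hKu hpos]
  have hnorm : ‖z T - z 0‖ ^ 2 ≤ (7 / 12 * K * ‖z 0‖ * T ^ 2) ^ 2 :=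
    pow_le_pow_left₀ (norm_nonneg _) (hdisp T ⟨hT, le_rfl⟩) 2
  have hexpand : ‖z T‖ ^ 2 = ‖z 0‖ ^ 2 + 2 * ⟪z 0, z T - z 0⟫ + ‖z T - z 0‖ ^ 2 := by
    rw [← norm_add_sq_real, add_sub_cancel]
  have hKT₂ : K ^ 2 * T ^ 4 ≤ ζ * T ^ 2 := by
    nlinarith [mul_le_mul_of_nonneg_right hKT (sq_nonneg T)]
  nlinarith [mul_le_mul_of_nonneg_right hKT₂ (sq_nonneg ‖z 0‖)]

theorem norm_le_of_inner_le_neg_mul (hz : ∀ s, HasDerivAt z (v s) s)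
    (hv : ∀ s, HasDerivAt v (φ s) s) (hφ : Continuous φ) (hv0 : v 0 = 0) {ζ K T : ℝ}
    (hζK : ζ ≤ K) (hKT : K ^ 2 * T ^ 2 ≤ ζ) (hT : 0 ≤ T) (hφz : ∀ u, ‖φ u‖ ≤ K * ‖z u‖)
    (hmono : ∀ u, ⟪z u, φ u⟫ ≤ -(ζ * ‖z u‖ ^ 2)) :
    ‖z T‖ ≤ (1 - ζ * T ^ 2 / 27) * ‖z 0‖ := by
  have hζT₀ : 0 ≤ ζ * T ^ 2 :=
    mul_nonneg ((by positivity : 0 ≤ K ^ 2 * T ^ 2).trans hKT) (sq_nonneg T)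
  have hζT₁ : ζ * T ^ 2 ≤ 1 :=
    (mul_le_mul_of_nonneg_right hζK (sq_nonneg T)).trans (mul_sq_le_one_of_sq_mul_sq_le hζK hKT)
  have hsq := norm_sq_le_of_inner_le_neg_mul hz hv hφ hv0 hζK hKT hT hφz hmono
  refine (pow_le_pow_iff_left₀ (norm_nonneg _)
    (mul_nonneg (by linarith) (norm_nonneg _)) two_ne_zero).1 ?_
  nlinarith [mul_nonneg hζT₀ (sq_nonneg ‖z 0‖)]

end SecondOrder

theorem norm_neg_sub_sub_le {H : Type*} [SeminormedAddCommGroup H] {F : H → H} {L : ℝ}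
    (hF : ∀ a b : H, ‖F a - F b‖ ≤ L * ‖a - b‖) (a b : H) :
    ‖-(a - b) - (F a - F b)‖ ≤ (1 + L) * ‖a - b‖ := by
  have := norm_sub_le (-(a - b)) (F a - F b)
  rw [norm_neg] at this
  linarith [hF a b]

theorem inner_neg_sub_sub_le {H : Type*} [NormedAddCommGroup H] [InnerProductSpace ℝ H]
    {F : H → H} {ζ : ℝ} {a b : H}
    (hmono : ⟪a - b, a - b⟫ + ⟪F a - F b, a - b⟫ ≥ ζ * ‖a - b‖ ^ 2) :
    ⟪a - b, -(a - b) - (F a - F b)⟫ ≤ -(ζ * ‖a - b‖ ^ 2) := by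
  rw [ge_iff_le, real_inner_self_eq_norm_sq] at hmono
  rw [inner_sub_right, inner_neg_right, real_inner_self_eq_norm_sq, real_inner_comm]
  linarith

theorem stmt_14_general {H : Type*} [NormedAddCommGroup H] [InnerProductSpace ℝ H]
    [MeasurableSpace H]
    (F : H → H) (ζ L : ℝ) (hL : 0 ≤ L) (hζL : ζ ≤ L + 1)
    (hmono : ∀ a b : H,
      (inner ℝ (a - b) (a - b) : ℝ) + (inner ℝ (F a - F b) (a - b) : ℝ) ≥ ζ * ‖a - b‖ ^ 2)
    (hF : ∀ a b : H, ‖F a - F b‖ ≤ L * ‖a - b‖)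
    (T : ℝ) (hT : 0 < T) (hTL : T ^ 2 * (1 + L) ≤ ζ / (1 + L))
    (q p : H → H → ℝ → H)
    (hflow : ∀ x v : H,
      q x v 0 = x ∧ p x v 0 = v ∧
      (∀ s : ℝ, HasDerivAt (q x v) (p x v s) s) ∧
      (∀ s : ℝ, HasDerivAt (p x v) (-(q x v s) - F (q x v s)) s))
    (μ : Measure H) [IsProbabilityMeasure μ] :
    ∀ x y : H,
      ∫ v, ‖q x v T - q y v T‖ ∂μ ≤ (1 - ζ * T ^ 2 / 27) * ‖x - y‖ := by
  intro x y
  have hKT : (1 + L) ^ 2 * T ^ 2 ≤ ζ := by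
    have := (le_div_iff₀ (by linarith : (0 : ℝ) < 1 + L)).1 hTL
    linarith
  have hFc : Continuous F :=
    (LipschitzWith.of_dist_le' fun a b => by simpa only [dist_eq_norm] using hF a b).continuous
  have hpath : ∀ v, ‖q x v T - q y v T‖ ≤ (1 - ζ * T ^ 2 / 27) * ‖x - y‖ := fun v => by
    obtain ⟨hqx₀, hpx₀, hqx, hpx⟩ := hflow x v
    obtain ⟨hqy₀, hpy₀, hqy, hpy⟩ := hflow y v
    have hqxc : Continuous (q x v) := continuous_iff_continuousAt.2 fun s => (hqx s).continuousAt
    have hqyc : Continuous (q y v) := continuous_iff_continuousAt.2 fun s => (hqy s).continuousAt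
    have := norm_le_of_inner_le_neg_mul (z := fun s => q x v s - q y v s)
      (φ := fun s => -(q x v s - q y v s) - (F (q x v s) - F (q y v s)))
      (fun s => (hqx s).sub (hqy s)) (fun s => ((hpx s).sub (hpy s)).congr_deriv (by abel))
      (by fun_prop) (by simp only [hpx₀, hpy₀, sub_self]) (by linarith) hKT hT.le
      (fun s => norm_neg_sub_sub_le hF _ _) (fun s => inner_neg_sub_sub_le (hmono _ _))
    simpa only [hqx₀, hqy₀] using this
  calc ∫ v, ‖q x v T - q y v T‖ ∂μ ≤ ∫ _, (1 - ζ * T ^ 2 / 27) * ‖x - y‖ ∂μ :=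
        integral_mono_of_nonneg (ae_of_all _ fun _ => norm_nonneg _) (integrable_const _)
          (ae_of_all _ hpath)
    _ = (1 - ζ * T ^ 2 / 27) * ‖x - y‖ := by simp

theorem stmt_14 {H : Type*} [NormedAddCommGroup H] [InnerProductSpace ℝ H]
    [MeasurableSpace H]
    (F : H → H) (ζ L : ℝ) (hζ : 0 < ζ) (hL : 0 ≤ L) (hζL : ζ ≤ L + 1)
    (hmono : ∀ a b : H,
      (inner ℝ (a - b) (a - b) : ℝ) + (inner ℝ (F a - F b) (a - b) : ℝ) ≥ ζ * ‖a - b‖ ^ 2)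
    (hF : ∀ a b : H, ‖F a - F b‖ ≤ L * ‖a - b‖)
    (T : ℝ) (hT : 0 < T) (hTL : T ^ 2 * (1 + L) ≤ ζ / (1 + L))
    (q p : H → H → ℝ → H)
    (hflow : ∀ x v : H,
      q x v 0 = x ∧ p x v 0 = v ∧
      (∀ s : ℝ, HasDerivAt (q x v) (p x v s) s) ∧
      (∀ s : ℝ, HasDerivAt (p x v) (-(q x v s) - F (q x v s)) s))
    (μ : Measure H) [IsProbabilityMeasure μ] :
    ∀ x y : H,
      ∫ v, ‖q x v T - q y v T‖ ∂μ ≤ (1 - ζ * T ^ 2 / 27) * ‖x - y‖ :=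
  stmt_14_general F ζ L hL hζL hmono hF T hT hTL q p hflow μ
end
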